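/- arXiv:math/0603359 — 5 statements merged into one kernel-verified Lean document; each statement's English description precedes it below -/
import Mathlib

section
/- Let Q be a connected graph and h, h' two height functions on Q taking values with the same parities (h(i) ≡ h'(i) mod 2 for all i). Then h' can be obtained from h by a finite sequence of elementary orientation reversal operations s_i⁺ (applied at sinks) and s_i⁻ (applied at sources). -/
/-- `h : I → ℤ` is a height function on the graph `Q`. -/
def IsHeightFunction {I : Type*} (Q : SimpleGraph I) (h : I → ℤ) : Prop :=
  ∀ i j, Q.Adj i j → h i - h j = 1 ∨ h i - h j = -1

/-- `i` is a sink for `Q_h` (a local minimum of `h`). -/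
def IsSinkAt {I : Type*} (Q : SimpleGraph I) (h : I → ℤ) (i : I) : Prop :=
  ∀ j, Q.Adj i j → h j = h i + 1

/-- `i` is a source for `Q_h` (a local maximum of `h`). -/
def IsSourceAt {I : Type*} (Q : SimpleGraph I) (h : I → ℤ) (i : I) : Prop :=
  ∀ j, Q.Adj i j → h j = h i - 1

/-- One elementary orientation reversal operation: `s_i⁺` applied at a sink
(raising `h i` by `2`), or `s_i⁻` applied at a source (lowering `h i` by `2`). -/
def HeightStep {I : Type*} [DecidableEq I] (Q : SimpleGraph I) (h h' : I → ℤ) : Prop :=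
  (∃ i, IsSinkAt Q h i ∧ h' = Function.update h i (h i + 2)) ∨
  (∃ i, IsSourceAt Q h i ∧ h' = Function.update h i (h i - 2))

lemma exists_source_aux {I : Type*} [Fintype I] (Q : SimpleGraph I) (h h' : I → ℤ)
    (hh : IsHeightFunction Q h) (hh' : IsHeightFunction Q h')
    (i₀ : I) (hpos : h' i₀ < h i₀) :
    ∃ i, IsSourceAt Q h i ∧ h' i < h i := by
  classical
  set d : I → ℤ := fun i => h i - h' i with hd
  obtain ⟨m, -, hm⟩ := Finset.exists_max_image Finset.univ d ⟨i₀, Finset.mem_univ i₀⟩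
  set S : Finset I := Finset.univ.filter (fun j => d j = d m) with hS
  have hmS : m ∈ S := by simp [hS]
  obtain ⟨i, hiS, hi⟩ := Finset.exists_max_image S h ⟨m, hmS⟩
  have hdi : d i = d m := by simpa [hS] using hiS
  have hdi' : h i - h' i = h m - h' m := hdi
  refine ⟨i, ?_, ?_⟩
  · intro j hadj
    rcases hh i j hadj with h1 | h1
    · omega
    · -- h j = h i + 1, derive contradiction
      exfalso
      rcases hh' i j hadj with h2 | h2
      · -- h' j = h' i - 1, then d j = d i + 2 > d m
        have : d j = d i + 2 := by simp only [hd]; omega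
        have := hm j (Finset.mem_univ j)
        omega
      · -- h' j = h' i + 1, then d j = d i, j ∈ S, h j > h i contradiction
        have hjS : j ∈ S := by simp only [hS, Finset.mem_filter, Finset.mem_univ, true_and, hd]; omega
        have := hi j hjS
        omega
  · have h1 := hm i₀ (Finset.mem_univ i₀)
    simp only [hd] at h1 hdi
    omega

lemma exists_sink_aux {I : Type*} [Fintype I] (Q : SimpleGraph I) (h h' : I → ℤ)
    (hh : IsHeightFunction Q h) (hh' : IsHeightFunction Q h')
    (i₀ : I) (hpos : h i₀ < h' i₀) :
    ∃ i, IsSinkAt Q h i ∧ h i < h' i := by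
  have hhn : IsHeightFunction Q (fun i => -h i) := by
    intro i j hadj
    show -h i - -h j = 1 ∨ -h i - -h j = -1
    rcases hh i j hadj with h1 | h1 <;> [right; left] <;> omega
  have hhn' : IsHeightFunction Q (fun i => -h' i) := by
    intro i j hadj
    show -h' i - -h' j = 1 ∨ -h' i - -h' j = -1
    rcases hh' i j hadj with h1 | h1 <;> [right; left] <;> omega
  obtain ⟨i, hsrc, hlt⟩ := exists_source_aux Q (fun i => -h i) (fun i => -h' i) hhn hhn' i₀
    (by show -h' i₀ < -h i₀; omega)
  have hlt' : -h' i < -h i := hlt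
  exact ⟨i, fun j hadj => by have : -h j = -h i - 1 := hsrc j hadj; omega, by omega⟩

/-- On a connected finite graph, any two height functions with the
same parities can be obtained from one another by a finite sequence of elementary
orientation reversal operations `s_i⁺` (at sinks) and `s_i⁻` (at sources). -/
theorem heightFunction_connected_by_reversals {I : Type*} [Fintype I] [DecidableEq I]
    (Q : SimpleGraph I) (hconn : Q.Connected)
    (h h' : I → ℤ) (hh : IsHeightFunction Q h) (hh' : IsHeightFunction Q h')
    (hpar : ∀ i, h i % 2 = h' i % 2) :
    Relation.ReflTransGen (HeightStep Q) h h' := by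
  classical
  have hpar2 : ∀ i, (h i - h' i) % 2 = 0 := fun i => by have := hpar i; omega
  clear hpar hconn
  generalize hn : (∑ i, (h i - h' i).natAbs) = n
  induction n using Nat.strong_induction_on generalizing h with
  | _ n ih =>
  by_cases heq : h = h'
  · exact heq ▸ Relation.ReflTransGen.refl
  · obtain ⟨i₀, hi₀⟩ := Function.ne_iff.mp heq
    rcases lt_or_gt_of_ne hi₀ with hlt | hgt
    · -- h i₀ < h' i₀ : use sink
      obtain ⟨i, hsink, hilt⟩ := exists_sink_aux Q h h' hh hh' i₀ hlt
      set g : I → ℤ := Function.update h i (h i + 2) with hg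
      have hgi : g i = h i + 2 := by simp [hg]
      have hgne : ∀ j, j ≠ i → g j = h j := fun j hj => Function.update_of_ne hj _ _
      have hstep : HeightStep Q h g := Or.inl ⟨i, hsink, rfl⟩
      have hhg : IsHeightFunction Q g := by
        intro a b hab
        by_cases ha : a = i
        · have hab' : Q.Adj i b := by rwa [ha] at hab
          have hb : b ≠ i := hab'.ne'
          have := hsink b hab'
          rw [ha, hgi, hgne b hb]; omega
        · by_cases hb : b = i
          · have hab' : Q.Adj i a := by rw [hb] at hab; exact hab.symm
            have := hsink a hab'
            rw [hb, hgi, hgne a ha]; omega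
          · rw [hgne a ha, hgne b hb]; exact hh a b hab
      have hparg : ∀ j, (g j - h' j) % 2 = 0 := by
        intro j
        by_cases hj : j = i
        · rw [hj, hgi]; have := hpar2 i; omega
        · rw [hgne j hj]; exact hpar2 j
      have hge2 : h' i - h i ≥ 2 := by have := hpar2 i; omega
      have hsum : ∑ j, (g j - h' j).natAbs < n := by
        rw [← hn, ← Finset.add_sum_erase _ _ (Finset.mem_univ i),
            ← Finset.add_sum_erase _ (fun j => (h j - h' j).natAbs) (Finset.mem_univ i)]
        have : ∑ j ∈ Finset.univ.erase i, (g j - h' j).natAbs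
            = ∑ j ∈ Finset.univ.erase i, (h j - h' j).natAbs :=
          Finset.sum_congr rfl fun j hj => by rw [hgne j (Finset.ne_of_mem_erase hj)]
        rw [this, hgi]
        have h1 : (h i + 2 - h' i).natAbs < (h i - h' i).natAbs := by omega
        omega
      exact Relation.ReflTransGen.head hstep (ih _ hsum g hhg hparg rfl)
    · -- h' i₀ < h i₀ : use source
      obtain ⟨i, hsrc, hilt⟩ := exists_source_aux Q h h' hh hh' i₀ hgt
      set g : I → ℤ := Function.update h i (h i - 2) with hg
      have hgi : g i = h i - 2 := by simp [hg]
      have hgne : ∀ j, j ≠ i → g j = h j := fun j hj => Function.update_of_ne hj _ _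
      have hstep : HeightStep Q h g := Or.inr ⟨i, hsrc, rfl⟩
      have hhg : IsHeightFunction Q g := by
        intro a b hab
        by_cases ha : a = i
        · have hab' : Q.Adj i b := by rwa [ha] at hab
          have hb : b ≠ i := hab'.ne'
          have := hsrc b hab'
          rw [ha, hgi, hgne b hb]; omega
        · by_cases hb : b = i
          · have hab' : Q.Adj i a := by rw [hb] at hab; exact hab.symm
            have := hsrc a hab'
            rw [hb, hgi, hgne a ha]; omega
          · rw [hgne a ha, hgne b hb]; exact hh a b hab
      have hparg : ∀ j, (g j - h' j) % 2 = 0 := by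
        intro j
        by_cases hj : j = i
        · rw [hj, hgi]; have := hpar2 i; omega
        · rw [hgne j hj]; exact hpar2 j
      have hge2 : h i - h' i ≥ 2 := by have := hpar2 i; omega
      have hsum : ∑ j, (g j - h' j).natAbs < n := by
        rw [← hn, ← Finset.add_sum_erase _ _ (Finset.mem_univ i),
            ← Finset.add_sum_erase _ (fun j => (h j - h' j).natAbs) (Finset.mem_univ i)]
        have : ∑ j ∈ Finset.univ.erase i, (g j - h' j).natAbs
            = ∑ j ∈ Finset.univ.erase i, (h j - h' j).natAbs :=
          Finset.sum_congr rfl fun j hj => by rw [hgne j (Finset.ne_of_mem_erase hj)]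
        rw [this, hgi]
        have h1 : (h i - 2 - h' i).natAbs < (h i - h' i).natAbs := by omega
        omega
      exact Relation.ReflTransGen.head hstep (ih _ hsum g hhg hparg rfl)
end

section
/- In the proof of connectivity of height functions: if h, h' are height functions on a connected graph Q with d(h,h') = Σ_i |h(i)-h'(i)| > 0, then either the set I₊ = {i : h(i) > h'(i)} contains a source of Q_h, or the set I₋ = {i : h(i) < h'(i)} contains a sink of Q_h, and applying the corresponding operation s_i⁻ (resp. s_i⁺) strictly decreases d(h,h') by 2. -/
/-- The distance `d(h,h') = Σ_i |h i - h' i|` between two height functions. -/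
def heightDist {I : Type*} [Fintype I] (h h' : I → ℤ) : ℤ :=
  ∑ i, |h i - h' i|

lemma heightDist_update {I : Type*} [Fintype I] [DecidableEq I] (h h' : I → ℤ) (i : I)
    (c : ℤ) :
    heightDist (Function.update h i c) h' =
      heightDist h h' - |h i - h' i| + |c - h' i| := by
  have e1 : heightDist h h' =
      |h i - h' i| + ∑ j ∈ Finset.univ.erase i, |h j - h' j| :=
    (Finset.add_sum_erase _ (fun j => |h j - h' j|) (Finset.mem_univ i)).symm
  have e2 : heightDist (Function.update h i c) h' =
      |c - h' i| + ∑ j ∈ Finset.univ.erase i, |h j - h' j| := by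
    rw [heightDist, ← Finset.add_sum_erase _ _ (Finset.mem_univ i)]
    congr 1
    · rw [Function.update_self]
    · refine Finset.sum_congr rfl fun j hj => ?_
      rw [Function.update_of_ne (Finset.ne_of_mem_erase hj)]
  rw [e1, e2]; ring

/-- If `d(h,h') > 0`, then either `I₊ = {i : h i > h' i}` contains a
source `i` of `Q_h` and the operation `s_i⁻` decreases `d` by exactly `2`, or
`I₋ = {i : h i < h' i}` contains a sink `i` of `Q_h` and `s_i⁺` decreases `d` by
exactly `2`. -/
theorem exists_decreasing_reversal {I : Type*} [Fintype I] [DecidableEq I]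
    (Q : SimpleGraph I) (hconn : Q.Connected)
    (h h' : I → ℤ) (hh : IsHeightFunction Q h) (hh' : IsHeightFunction Q h')
    (hpar : ∀ i, h i % 2 = h' i % 2)
    (hd : 0 < heightDist h h') :
    (∃ i, h' i < h i ∧ IsSourceAt Q h i ∧
        heightDist (Function.update h i (h i - 2)) h' = heightDist h h' - 2) ∨
    (∃ i, h i < h' i ∧ IsSinkAt Q h i ∧
        heightDist (Function.update h i (h i + 2)) h' = heightDist h h' - 2) := by
  by_cases hne : ∃ i, h' i < h i
  · -- I₊ nonempty: take a maximum of h on I₊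
    left
    obtain ⟨i0, hi0⟩ := hne
    have hs : (Finset.univ.filter fun i => h' i < h i).Nonempty :=
      ⟨i0, by simpa using hi0⟩
    obtain ⟨i, hi_mem, hmax⟩ := Finset.exists_max_image _ h hs
    have hi : h' i < h i := by simpa using hi_mem
    have gap : h' i + 2 ≤ h i := by have := hpar i; omega
    have hsrc : IsSourceAt Q h i := by
      intro j hadj
      rcases hh i j hadj with e | e
      · omega
      · -- h j = h i + 1, then j ∈ I₊, contradicting maximality
        exfalso
        have hj : h' j < h j := by
          rcases hh' i j hadj with e' | e' <;> omega
        have := hmax j (by simpa using hj)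
        omega
    refine ⟨i, hi, hsrc, ?_⟩
    rw [heightDist_update]
    rw [abs_of_nonneg (by omega : (0:ℤ) ≤ h i - h' i),
      abs_of_nonneg (by omega : (0:ℤ) ≤ h i - 2 - h' i)]
    ring
  · -- I₊ empty: I₋ nonempty since d > 0
    right
    push_neg at hne
    have hne' : ∃ i, h i < h' i := by
      by_contra hc
      push_neg at hc
      have : ∀ i, h i = h' i := fun i => le_antisymm (hne i) (hc i)
      have : heightDist h h' = 0 := by
        simp [heightDist, this]
      omega
    obtain ⟨i0, hi0⟩ := hne'
    have hs : (Finset.univ.filter fun i => h i < h' i).Nonempty :=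
      ⟨i0, by simpa using hi0⟩
    obtain ⟨i, hi_mem, hmin⟩ := Finset.exists_min_image _ h hs
    have hi : h i < h' i := by simpa using hi_mem
    have gap : h i + 2 ≤ h' i := by have := hpar i; omega
    have hsnk : IsSinkAt Q h i := by
      intro j hadj
      rcases hh i j hadj with e | e
      · -- h j = h i - 1, then j ∈ I₋, contradicting minimality
        exfalso
        have hj : h j < h' j := by
          rcases hh' i j hadj with e' | e' <;> omega
        have := hmin j (by simpa using hj)
        omega
      · omega
    refine ⟨i, hi, hsnk, ?_⟩
    rw [heightDist_update]
    rw [abs_of_nonpos (by omega : h i - h' i ≤ (0:ℤ)),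
      abs_of_nonpos (by omega : h i + 2 - h' i ≤ (0:ℤ))]
    ring
end

section
/- For vertices q₁, q₂ of the AR quiver Q̂ and a height function h with image Q_h ⊆ Q̂: if q₁ lies on or above Q_h and q₂ lies strictly below Q_h, then Hom_C(X_{q₁}, X_{q₂}) = 0. -/
/-- The directed path order on the AR quiver `Q̂`: one step goes from `(i,n)` to `(j,n+1)`
when `i` and `j` are adjacent in the McKay graph `Q`. `q ⪯ q'` iff there is a directed
path from `q` to `q'`. -/
def ARPrec {I : Type*} (Q : SimpleGraph I) : (I × ℤ) → (I × ℤ) → Prop :=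
  Relation.ReflTransGen (fun a b => Q.Adj a.1 b.1 ∧ b.2 = a.2 + 1)

/-- Let `h` be a height function on the McKay graph `Q` and let
`q₁ = (i,n)`, `q₂ = (j,m)` be vertices of the AR quiver `Q̂` (so `n ≡ p i`, `m ≡ p j`
mod 2). If `q₁` lies on or above the slice `Q_h` (`n ≥ h i`) and `q₂` lies strictly below
it (`m < h j`), then `Hom_C(X_{q₁}, X_{q₂}) = 0`.

Context axiomatization: `HomC q q'` is the space `Hom_C(X_q, X_{q'})` of morphisms in the
category `C = Coh_G(ℙ¹)₀`; by the description of these Hom spaces via the mesh algebra of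
`Q̂`, `Hom_C(X_q, X_{q'})` vanishes unless there is a directed path `q ⪯ q'` in `Q̂` (`hkey`). -/
theorem hom_vanishing_above_below {I : Type*} (Q : SimpleGraph I) (p : I → ZMod 2)
    (hbip : ∀ i j, Q.Adj i j → p j = p i + 1)
    (HomC : (I × ℤ) → (I × ℤ) → ModuleCat ℂ)
    (hkey : ∀ q q' : I × ℤ, ¬ ARPrec Q q q' → Subsingleton (HomC q q'))
    (h : I → ℤ) (hh : ∀ i j, Q.Adj i j → h i - h j = 1 ∨ h i - h j = -1)
    (i j : I) (n m : ℤ)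
    (hq₁ : (n : ZMod 2) = p i) (hq₂ : (m : ZMod 2) = p j)
    (habove : h i ≤ n) (hbelow : m < h j) :
    Subsingleton (HomC (i, n) (j, m)) := by
  apply hkey
  intro hpath
  have key : ∀ b : I × ℤ, ARPrec Q (i, n) b → h b.1 ≤ b.2 := by
    intro b hb
    induction hb with
    | refl => exact habove
    | tail _ hstep ih =>
      rcases hstep with ⟨hadj, heq⟩
      rcases hh _ _ hadj with h1 | h1 <;> omega
  have := key (j, m) hpath
  simp at this
  omega
end

section
/- In the type Â_{n-1} model (n even), let C = (Π_{i odd} s_i)(Π_{i even} s_i) be the Coxeter element for the standard (alternating) orientation. Then C(e_i) = e_{i+2} - (2/n)δ for i even and C(e_i) = e_{i-2} + (2/n)δ for i odd; consequently C^{n/2}(e_i) = e_i - δ for i even and C^{n/2}(e_i) = e_i + δ for i odd. -/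
/-! Reflections `s_j` whose indices have the same parity have disjoint supports `{e_j, e_{j+1}}`,
so their product moves `e_k + cδ` only through the one factor whose support contains `k`:
`s_k` sends it to `e_{k+1} + (c - 1/n)δ` and `s_{k-1}` to `e_{k-1} + (c + 1/n)δ`. Applying the
even product and then the odd one gives `C(e_k + cδ) = e_{k ± 2} + (c ∓ 2/n)δ` without changing
the parity of `k`; after `n/2` steps the index is back at `k` and the δ-coefficient has moved
by `∓1`. Parity of residues mod `n` is the ring map `ZMod n → ZMod 2`, which exists as `n` is even. -/

open Finset

/-- The ambient vector space `V = ℝ^{n+1}` with basis `δ, e_i (i ∈ ℤ/n)`. -/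
abbrev TypeAVec (n : ℕ) : Type := (ZMod n → ℝ) × ℝ

/-- The basis vector `e_i`. -/
noncomputable def eVec {n : ℕ} (i : ZMod n) : TypeAVec n := (Pi.single i 1, 0)

/-- The basis vector `δ`. -/
def deltaVec (n : ℕ) : TypeAVec n := (0, 1)

/-- The inner product with `(e_i, e_j) = δ_{ij}` and `(v, δ) = 0`. -/
noncomputable def formA {n : ℕ} [NeZero n] (v w : TypeAVec n) : ℝ := ∑ i, v.1 i * w.1 i

/-- The simple root `α_i = e_i - e_{i+1} + δ/n`. -/
noncomputable def alphaA {n : ℕ} (i : ZMod n) : TypeAVec n :=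
  eVec i - eVec (i + 1) + (1 / (n : ℝ)) • deltaVec n

/-- The reflection `s_i(v) = v - (v, α_i) α_i`. -/
noncomputable def reflA {n : ℕ} [NeZero n] (i : ZMod n) (v : TypeAVec n) : TypeAVec n :=
  v - formA v (alphaA i) • alphaA i

section FoldrComp

variable {ι α : Type*} (g : ι → α → α)

theorem List.foldr_comp_id_append (l₁ l₂ : List ι) :
    (l₁ ++ l₂).foldr (fun i f => g i ∘ f) id =
      l₁.foldr (fun i f => g i ∘ f) id ∘ l₂.foldr (fun i f => g i ∘ f) id := by
  induction l₁ with
  | nil => rfl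
  | cons a l ih => simp only [List.cons_append, List.foldr_cons, ih]; rfl

theorem List.foldr_comp_id_apply_of_forall_eq {l : List ι} {v : α} (h : ∀ i ∈ l, g i v = v) :
    l.foldr (fun i f => g i ∘ f) id v = v := by
  induction l with
  | nil => rfl
  | cons a l ih =>
    simp only [List.foldr_cons, Function.comp_apply,
      ih fun i hi => h i (List.mem_cons_of_mem a hi), h a List.mem_cons_self]

theorem List.foldr_comp_id_apply_of_unique {l : List ι} (hl : l.Nodup) {j : ι} (hj : j ∈ l)
    {v w : α} (hjv : g j v = w) (hv : ∀ i ∈ l, i ≠ j → g i v = v)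
    (hw : ∀ i ∈ l, i ≠ j → g i w = w) :
    l.foldr (fun i f => g i ∘ f) id v = w := by
  induction l with
  | nil => simp at hj
  | cons a l ih =>
    obtain ⟨hal, hl⟩ := List.nodup_cons.mp hl
    simp only [List.foldr_cons, Function.comp_apply]
    rcases eq_or_ne a j with rfl | haj
    · rw [List.foldr_comp_id_apply_of_forall_eq g fun i hi =>
        hv i (List.mem_cons_of_mem a hi) (ne_of_mem_of_not_mem hi hal), hjv]
    · rw [ih hl ((List.mem_cons.mp hj).resolve_left haj.symm)
        (fun i hi => hv i (List.mem_cons_of_mem a hi))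
        (fun i hi => hw i (List.mem_cons_of_mem a hi))]
      exact hw a List.mem_cons_self haj

end FoldrComp

section Reflections

variable {n : ℕ}

theorem alphaA_fst_apply (j k : ZMod n) :
    (alphaA j).1 k = (if k = j then 1 else 0) - (if k = j + 1 then 1 else 0) := by
  simp [alphaA, eVec, deltaVec, Pi.single_apply]

variable [NeZero n]

theorem formA_eVec_add_smul_deltaVec (k : ZMod n) (c : ℝ) (w : TypeAVec n) :
    formA (eVec k + c • deltaVec n) w = w.1 k := by
  simp [formA, eVec, deltaVec, Pi.single_apply]

theorem reflA_eVec_add_smul_deltaVec (j k : ZMod n) (c : ℝ) :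
    reflA j (eVec k + c • deltaVec n) =
      eVec k + c • deltaVec n -
        ((if k = j then 1 else 0) - (if k = j + 1 then 1 else 0) : ℝ) • alphaA j := by
  rw [reflA, formA_eVec_add_smul_deltaVec, alphaA_fst_apply]

theorem reflA_eVec_add_smul_deltaVec_of_ne {j k : ZMod n} (hj : j ≠ k) (hj₁ : j + 1 ≠ k)
    (c : ℝ) : reflA j (eVec k + c • deltaVec n) = eVec k + c • deltaVec n := by
  simp [reflA_eVec_add_smul_deltaVec, hj.symm, hj₁.symm]

theorem reflA_eVec_self_add_smul_deltaVec (h : (1 : ZMod n) ≠ 0) (k : ZMod n) (c : ℝ) :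
    reflA k (eVec k + c • deltaVec n) = eVec (k + 1) + (c - 1 / n) • deltaVec n := by
  have hk : k ≠ k + 1 := fun e => h (by linear_combination -e)
  rw [reflA_eVec_add_smul_deltaVec, if_pos rfl, if_neg hk, alphaA]
  module

theorem reflA_sub_one_eVec_add_smul_deltaVec (h : (1 : ZMod n) ≠ 0) (k : ZMod n) (c : ℝ) :
    reflA (k - 1) (eVec k + c • deltaVec n) = eVec (k - 1) + (c + 1 / n) • deltaVec n := by
  have hk : k ≠ k - 1 := fun e => h (by linear_combination e)
  rw [reflA_eVec_add_smul_deltaVec, if_neg hk, if_pos (sub_add_cancel k 1).symm, alphaA,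
    sub_add_cancel]
  module

end Reflections

section Parity

variable {n : ℕ}

def parity (hn : 2 ∣ n) : ZMod n →+* ZMod 2 := ZMod.castHom hn (ZMod 2)

theorem one_ne_zero_of_two_dvd (hn : 2 ∣ n) : (1 : ZMod n) ≠ 0 :=
  have := (parity hn).domain_nontrivial
  one_ne_zero

variable (hn : 2 ∣ n)

theorem parity_two : parity hn 2 = 0 := by
  rw [map_ofNat]
  rfl

variable [NeZero n]

theorem parity_eq_zero_iff (i : ZMod n) : parity hn i = 0 ↔ Even i.val := by
  rw [parity, ZMod.castHom_apply, ZMod.cast_eq_val, ZMod.natCast_eq_zero_iff_even]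

theorem parity_eq_one_iff (i : ZMod n) : parity hn i = 1 ↔ Odd i.val := by
  rw [parity, ZMod.castHom_apply, ZMod.cast_eq_val, ZMod.natCast_eq_one_iff_odd]

end Parity

section ReflProd

variable {n : ℕ} [NeZero n]

noncomputable def reflProd (l : List (ZMod n)) : TypeAVec n → TypeAVec n :=
  l.foldr (fun i f => reflA i ∘ f) id

theorem reflProd_append (l₁ l₂ : List (ZMod n)) :
    reflProd (l₁ ++ l₂) = reflProd l₁ ∘ reflProd l₂ :=
  List.foldr_comp_id_append reflA l₁ l₂

variable {hn : 2 ∣ n} {l : List (ZMod n)} {ε : ZMod 2} (hl : ∀ j, j ∈ l ↔ parity hn j = ε)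
  (hd : l.Nodup)
include hl hd

theorem reflProd_eVec_add_smul_deltaVec_of_parity_eq {k : ZMod n} (hk : parity hn k = ε)
    (c : ℝ) : reflProd l (eVec k + c • deltaVec n) = eVec (k + 1) + (c - 1 / n) • deltaVec n := by
  refine List.foldr_comp_id_apply_of_unique reflA hd ((hl k).2 hk)
    (reflA_eVec_self_add_smul_deltaVec (one_ne_zero_of_two_dvd hn) k c)
    (fun i hi hik => reflA_eVec_add_smul_deltaVec_of_ne hik (fun e => ?_) _)
    (fun i hi hik => reflA_eVec_add_smul_deltaVec_of_ne (fun e => ?_)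
      (fun e => hik (add_right_cancel e)) _)
  all_goals
    have := congrArg (parity hn) e
    simp [(hl i).1 hi, hk] at this

theorem reflProd_eVec_add_smul_deltaVec_of_parity_eq_add_one {k : ZMod n}
    (hk : parity hn k = ε + 1) (c : ℝ) :
    reflProd l (eVec k + c • deltaVec n) = eVec (k - 1) + (c + 1 / n) • deltaVec n := by
  refine List.foldr_comp_id_apply_of_unique reflA hd ((hl _).2 (by simp [hk]))
    (reflA_sub_one_eVec_add_smul_deltaVec (one_ne_zero_of_two_dvd hn) k c)
    (fun i hi hik => reflA_eVec_add_smul_deltaVec_of_ne (fun e => ?_)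
      (fun e => hik (eq_sub_of_add_eq e)) _)
    (fun i hi hik => reflA_eVec_add_smul_deltaVec_of_ne hik (fun e => ?_) _)
  all_goals
    have := congrArg (parity hn) e
    simp [(hl i).1 hi, hk] at this

end ReflProd

theorem iterate_apply_eVec_add_smul_deltaVec {n : ℕ} {C : TypeAVec n → TypeAVec n}
    {P : ZMod n → Prop} {d : ZMod n} {r : ℝ} (hP : ∀ k, P k → P (k + d))
    (hC : ∀ k c, P k → C (eVec k + c • deltaVec n) = eVec (k + d) + (c + r) • deltaVec n)
    (m : ℕ) (k : ZMod n) (hk : P k) (c : ℝ) :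
    C^[m] (eVec k + c • deltaVec n) = eVec (k + (m : ZMod n) * d) + (c + m * r) • deltaVec n := by
  induction m generalizing k c with
  | zero => simp
  | succ m ih =>
    rw [Function.iterate_succ_apply, hC k c hk, ih _ (hP k hk)]
    push_cast
    congr 2 <;> ring

theorem natCast_div_two_mul_two {n : ℕ} (hn : 2 ∣ n) : ((n / 2 : ℕ) : ZMod n) * 2 = 0 := by
  exact_mod_cast (congrArg (Nat.cast : ℕ → ZMod n) (Nat.div_mul_cancel hn)).trans
    (ZMod.natCast_self n)

theorem natCast_div_two_mul_two_div {n : ℕ} [NeZero n] (hn : 2 ∣ n) :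
    ((n / 2 : ℕ) : ℝ) * (2 / n) = 1 := by
  have : (n : ℝ) ≠ 0 := Nat.cast_ne_zero.mpr (NeZero.ne n)
  rw [Nat.cast_div hn two_ne_zero, Nat.cast_two]
  field_simp

section Coxeter

variable {n : ℕ} [NeZero n] {hn : 2 ∣ n} {l₁ l₂ : List (ZMod n)}
  (h₁ : ∀ j, j ∈ l₁ ↔ parity hn j = 1) (h₁d : l₁.Nodup)
  (h₂ : ∀ j, j ∈ l₂ ↔ parity hn j = 0) (h₂d : l₂.Nodup)
include h₁ h₁d h₂ h₂d

theorem reflProd_append_eVec_add_smul_deltaVec_of_parity_eq_zero (k : ZMod n)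
    (hk : parity hn k = 0) (c : ℝ) :
    reflProd (l₁ ++ l₂) (eVec k + c • deltaVec n) = eVec (k + 2) + (c - 2 / n) • deltaVec n := by
  have hk₁ : parity hn (k + 1) = 1 := by rw [map_add, map_one, hk, zero_add]
  rw [reflProd_append, Function.comp_apply,
    reflProd_eVec_add_smul_deltaVec_of_parity_eq h₂ h₂d hk,
    reflProd_eVec_add_smul_deltaVec_of_parity_eq h₁ h₁d hk₁, add_assoc, one_add_one_eq_two]
  congr 2
  ring

theorem reflProd_append_eVec_add_smul_deltaVec_of_parity_eq_one (k : ZMod n)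
    (hk : parity hn k = 1) (c : ℝ) :
    reflProd (l₁ ++ l₂) (eVec k + c • deltaVec n) = eVec (k - 2) + (c + 2 / n) • deltaVec n := by
  have hk' : parity hn k = 0 + 1 := by rw [hk, zero_add]
  have hk₁ : parity hn (k - 1) = 1 + 1 := by rw [map_sub, map_one, hk]; decide
  rw [reflProd_append, Function.comp_apply,
    reflProd_eVec_add_smul_deltaVec_of_parity_eq_add_one h₂ h₂d hk',
    reflProd_eVec_add_smul_deltaVec_of_parity_eq_add_one h₁ h₁d hk₁, sub_sub, one_add_one_eq_two]
  congr 2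
  ring

theorem reflProd_append_iterate_eVec_add_smul_deltaVec_of_parity_eq_zero (k : ZMod n)
    (hk : parity hn k = 0) (c : ℝ) :
    (reflProd (l₁ ++ l₂))^[n / 2] (eVec k + c • deltaVec n) = eVec k + (c - 1) • deltaVec n := by
  rw [iterate_apply_eVec_add_smul_deltaVec (P := (parity hn · = 0)) (d := 2) (r := -(2 / n))
      (fun k hk => by simp [hk, parity_two])
      (fun k c hk => by
        rw [reflProd_append_eVec_add_smul_deltaVec_of_parity_eq_zero h₁ h₁d h₂ h₂d k hk,
          sub_eq_add_neg])
      _ k hk,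
    natCast_div_two_mul_two hn, add_zero, mul_neg, natCast_div_two_mul_two_div hn, sub_eq_add_neg]

theorem reflProd_append_iterate_eVec_add_smul_deltaVec_of_parity_eq_one (k : ZMod n)
    (hk : parity hn k = 1) (c : ℝ) :
    (reflProd (l₁ ++ l₂))^[n / 2] (eVec k + c • deltaVec n) = eVec k + (c + 1) • deltaVec n := by
  rw [iterate_apply_eVec_add_smul_deltaVec (P := (parity hn · = 1)) (d := -2) (r := 2 / n)
      (fun k hk => by simp [hk, parity_two])
      (fun k c hk => by
        rw [reflProd_append_eVec_add_smul_deltaVec_of_parity_eq_one h₁ h₁d h₂ h₂d k hk,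
          sub_eq_add_neg])
      _ k hk,
    mul_neg, natCast_div_two_mul_two hn, neg_zero, add_zero, natCast_div_two_mul_two_div hn]

end Coxeter

/-- Let `Cox = (Π_{i odd} s_i)(Π_{i even} s_i)` be the Coxeter element
for the standard alternating orientation (the products are over any enumerations `l₁` of
the odd and `l₂` of the even residues; this is well defined since the reflections with
indices of equal parity pairwise commute). Then `Cox(e_i) = e_{i+2} - (2/n)δ` for `i` even,
`Cox(e_i) = e_{i-2} + (2/n)δ` for `i` odd, and consequently `Cox^{n/2}(e_i) = e_i - δ` for
`i` even and `Cox^{n/2}(e_i) = e_i + δ` for `i` odd. -/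
theorem typeA_coxeter_action (n : ℕ) [NeZero n] (hn : Even n)
    (l₁ l₂ : List (ZMod n)) (h₁ : ∀ i : ZMod n, i ∈ l₁ ↔ Odd i.val) (h₁d : l₁.Nodup)
    (h₂ : ∀ i : ZMod n, i ∈ l₂ ↔ Even i.val) (h₂d : l₂.Nodup)
    (Cox : TypeAVec n → TypeAVec n)
    (hCox : Cox = (l₁ ++ l₂).foldr (fun i f => reflA i ∘ f) id) :
    (∀ i : ZMod n, Even i.val →
        Cox (eVec i) = eVec (i + 2) - ((2 : ℝ) / n) • deltaVec n) ∧
    (∀ i : ZMod n, Odd i.val →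
        Cox (eVec i) = eVec (i - 2) + ((2 : ℝ) / n) • deltaVec n) ∧
    (∀ i : ZMod n, Even i.val → Cox^[n / 2] (eVec i) = eVec i - deltaVec n) ∧
    (∀ i : ZMod n, Odd i.val → Cox^[n / 2] (eVec i) = eVec i + deltaVec n) := by
  obtain rfl : Cox = reflProd (l₁ ++ l₂) := hCox
  have h2 := hn.two_dvd
  have h₁' (i : ZMod n) := (h₁ i).trans (parity_eq_one_iff h2 i).symm
  have h₂' (i : ZMod n) := (h₂ i).trans (parity_eq_zero_iff h2 i).symm
  have he (i : ZMod n) : eVec i = eVec i + (0 : ℝ) • deltaVec n := by simp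
  refine ⟨fun i hi => ?_, fun i hi => ?_, fun i hi => ?_, fun i hi => ?_⟩
  · rw [he i, reflProd_append_eVec_add_smul_deltaVec_of_parity_eq_zero h₁' h₁d h₂' h₂d i
      ((parity_eq_zero_iff h2 i).2 hi)]
    module
  · rw [he i, reflProd_append_eVec_add_smul_deltaVec_of_parity_eq_one h₁' h₁d h₂' h₂d i
      ((parity_eq_one_iff h2 i).2 hi)]
    module
  · rw [he i, reflProd_append_iterate_eVec_add_smul_deltaVec_of_parity_eq_zero h₁' h₁d h₂' h₂d i
      ((parity_eq_zero_iff h2 i).2 hi)]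
    module
  · rw [he i, reflProd_append_iterate_eVec_add_smul_deltaVec_of_parity_eq_one h₁' h₁d h₂' h₂d i
      ((parity_eq_one_iff h2 i).2 hi)]
    module
end

section
/- In the type Â_{n-1} model (n even) with Coxeter element C as above: C^{n/2}(α) = α - (α, ε)δ for all α in the span of the e_i and δ, where ε = Σ_{i even} e_i - Σ_{i odd} e_i. -/
open Finset

/-- The vector `ε = Σ_{i even} e_i - Σ_{i odd} e_i`. -/
noncomputable def epsVec (n : ℕ) [NeZero n] : TypeAVec n :=
  ∑ i ∈ univ.filter (fun i : ZMod n => Even i.val), eVec i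
    - ∑ i ∈ univ.filter (fun i : ZMod n => Odd i.val), eVec i

lemma even_val_add_two {n : ℕ} [NeZero n] (hn : Even n) {i : ZMod n} (h : Even i.val) :
    Even ((i + 2 : ZMod n)).val := by
  have h2 : (2 : ZMod n) = ((2 : ℕ) : ZMod n) := by push_cast; rfl
  rw [ZMod.val_add, Nat.even_iff, Nat.mod_mod_of_dvd _ hn.two_dvd, Nat.add_mod,
    h2, ZMod.val_natCast, Nat.mod_mod_of_dvd _ hn.two_dvd]
  rw [Nat.even_iff] at h
  simp [h]

lemma odd_val_sub_two {n : ℕ} [NeZero n] (hn : Even n) {i : ZMod n} (h : Odd i.val) :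
    Odd ((i - 2 : ZMod n)).val := by
  by_contra hc
  rw [Nat.not_odd_iff_even] at hc
  have := even_val_add_two hn hc
  rw [sub_add_cancel] at this
  exact (Nat.not_odd_iff_even.2 this) h

lemma even_val_add_mul {n : ℕ} [NeZero n] (hn : Even n) {i : ZMod n} (h : Even i.val) :
    ∀ k : ℕ, Even ((i + 2 * (k : ZMod n)).val)
  | 0 => by simpa using h
  | (k+1) => by
      have heq : i + 2 * ((k+1 : ℕ) : ZMod n) = i + 2 * (k : ZMod n) + 2 := by
        push_cast; ring
      rw [heq]
      exact even_val_add_two hn (even_val_add_mul hn h k)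

lemma odd_val_sub_mul {n : ℕ} [NeZero n] (hn : Even n) {i : ZMod n} (h : Odd i.val) :
    ∀ k : ℕ, Odd ((i - 2 * (k : ZMod n)).val)
  | 0 => by simpa using h
  | (k+1) => by
      have heq : i - 2 * ((k+1 : ℕ) : ZMod n) = i - 2 * (k : ZMod n) - 2 := by
        push_cast; ring
      rw [heq]
      exact odd_val_sub_two hn (odd_val_sub_mul hn h k)

lemma iterEven {n : ℕ} [NeZero n] (hn : Even n)
    (Cox : TypeAVec n →ₗ[ℝ] TypeAVec n)
    (hCe : ∀ i : ZMod n, Even i.val →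
      Cox (eVec i) = eVec (i + 2) - ((2 : ℝ) / n) • deltaVec n)
    (hCd : Cox (deltaVec n) = deltaVec n) :
    ∀ (k : ℕ) (i : ZMod n), Even i.val →
      (⇑Cox)^[k] (eVec i) = eVec (i + 2 * (k : ZMod n)) - ((2 * (k : ℝ)) / n) • deltaVec n := by
  intro k
  induction k with
  | zero => intro i hi; simp
  | succ k ih =>
      intro i hi
      rw [Function.iterate_succ_apply', ih i hi, map_sub, map_smul, hCd,
        hCe _ (even_val_add_mul hn hi k)]
      have hidx : i + 2 * (k : ZMod n) + 2 = i + 2 * ((k+1 : ℕ) : ZMod n) := by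
        push_cast; ring
      rw [hidx, sub_sub, ← add_smul]
      congr 1
      push_cast; ring

lemma iterOdd {n : ℕ} [NeZero n] (hn : Even n)
    (Cox : TypeAVec n →ₗ[ℝ] TypeAVec n)
    (hCo : ∀ i : ZMod n, Odd i.val →
      Cox (eVec i) = eVec (i - 2) + ((2 : ℝ) / n) • deltaVec n)
    (hCd : Cox (deltaVec n) = deltaVec n) :
    ∀ (k : ℕ) (i : ZMod n), Odd i.val →
      (⇑Cox)^[k] (eVec i) = eVec (i - 2 * (k : ZMod n)) + ((2 * (k : ℝ)) / n) • deltaVec n := by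
  intro k
  induction k with
  | zero => intro i hi; simp
  | succ k ih =>
      intro i hi
      rw [Function.iterate_succ_apply', ih i hi, map_add, map_smul, hCd,
        hCo _ (odd_val_sub_mul hn hi k)]
      have hidx : i - 2 * (k : ZMod n) - 2 = i - 2 * ((k+1 : ℕ) : ZMod n) := by
        push_cast; ring
      rw [hidx, add_assoc, ← add_smul]
      congr 1
      push_cast; ring

/-- In the type `Â_{n-1}` model (`n` even), let `Cox` be the (linear)
Coxeter element, acting by `Cox(e_i) = e_{i+2} - (2/n)δ` for `i` even,
`Cox(e_i) = e_{i-2} + (2/n)δ` for `i` odd, and `Cox(δ) = δ`. Then for every `α` in the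
span of the `e_i` and `δ` (i.e. every `α ∈ V`):
`Cox^{n/2}(α) = α - (α, ε) δ` with `ε = Σ_{i even} e_i - Σ_{i odd} e_i`. -/
theorem typeA_coxeter_power (n : ℕ) [NeZero n] (hn : Even n)
    (Cox : TypeAVec n →ₗ[ℝ] TypeAVec n)
    (hCe : ∀ i : ZMod n, Even i.val →
      Cox (eVec i) = eVec (i + 2) - ((2 : ℝ) / n) • deltaVec n)
    (hCo : ∀ i : ZMod n, Odd i.val →
      Cox (eVec i) = eVec (i - 2) + ((2 : ℝ) / n) • deltaVec n)
    (hCd : Cox (deltaVec n) = deltaVec n) :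
    ∀ α : TypeAVec n, (⇑Cox)^[n / 2] α = α - formA α (epsVec n) • deltaVec n := by
  have hn0 : (n : ℝ) ≠ 0 := Nat.cast_ne_zero.2 (NeZero.ne n)
  have h2n : 2 * (n / 2) = n := Nat.mul_div_cancel' hn.two_dvd
  have hz : (2 : ZMod n) * ((n / 2 : ℕ) : ZMod n) = 0 := by
    have : (((2 * (n / 2) : ℕ)) : ZMod n) = ((n : ℕ) : ZMod n) := by rw [h2n]
    push_cast at this
    rw [this, ZMod.natCast_self]
  have hs : (2 * ((n / 2 : ℕ) : ℝ)) / n = 1 := by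
    have : (2 : ℝ) * ((n / 2 : ℕ) : ℝ) = (n : ℝ) := by
      rw [← Nat.cast_ofNat, ← Nat.cast_mul, h2n]
    rw [this, div_self hn0]
  -- value of the iterate on basis vectors
  have hP : ∀ i : ZMod n, (⇑Cox)^[n / 2] (eVec i)
      = eVec i - (if Even i.val then (1 : ℝ) else -1) • deltaVec n := by
    intro i
    rcases Nat.even_or_odd i.val with h | h
    · rw [iterEven hn Cox hCe hCd (n / 2) i h, hz, add_zero, hs, if_pos h]
    · rw [iterOdd hn Cox hCo hCd (n / 2) i h, hz, sub_zero, hs,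
        if_neg (Nat.not_even_iff_odd.2 h)]
      module
  have hPd : (⇑Cox)^[n / 2] (deltaVec n) = deltaVec n :=
    Function.iterate_fixed hCd (n / 2)
  intro α
  -- decompose α
  have hdecomp : α = (∑ i, α.1 i • eVec i) + α.2 • deltaVec n := by
    have h1 : (∑ i, α.1 i • eVec i).1 = α.1 := by
      funext x
      simp [eVec, Prod.fst_sum, Finset.sum_apply, Pi.single_apply, mul_ite]
    have h2 : (∑ i, α.1 i • eVec i).2 = 0 := by
      simp [eVec, Prod.snd_sum]
    ext
    · simp [deltaVec, h1]
    · simp [deltaVec, h1, h2]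
  -- epsVec components
  have heps : ∀ j, (epsVec n).1 j = (if Even j.val then (1 : ℝ) else -1) := by
    intro j
    rcases Nat.even_or_odd j.val with h | h
    · simp [epsVec, eVec, Prod.fst_sum, Finset.sum_apply, Pi.single_apply, Finset.sum_ite_eq',
        h, Nat.not_odd_iff_even.2 h]
    · simp [epsVec, eVec, Prod.fst_sum, Finset.sum_apply, Pi.single_apply, Finset.sum_ite_eq',
        h, Nat.not_even_iff_odd.2 h]
  have hform : formA α (epsVec n) = ∑ i, α.1 i * (if Even i.val then (1 : ℝ) else -1) := by
    unfold formA
    exact Finset.sum_congr rfl fun i _ => by rw [heps i]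
  -- rewrite LHS via linearity
  have hiter : (⇑Cox)^[n / 2] = ⇑(Cox ^ (n / 2)) := by
    funext x
    rw [Module.End.pow_apply]
  rw [hiter]
  conv_lhs => rw [hdecomp]
  rw [map_add, map_smul]
  rw [map_sum]
  simp only [map_smul, ← hiter, hP, hPd]
  have hrhs : α - formA α (epsVec n) • deltaVec n
      = (∑ i, α.1 i • eVec i) + α.2 • deltaVec n
        - (∑ i, α.1 i * (if Even i.val then (1 : ℝ) else -1)) • deltaVec n := by
    conv_rhs => rw [← hdecomp]
    rw [hform]
  rw [hrhs]
  simp only [smul_sub, smul_smul, Finset.sum_sub_distrib, ← Finset.sum_smul]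
  abel
end
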